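/- arXiv:1802.04641 — 4 statements merged into one kernel-verified Lean document; each statement's English description precedes it below -/
import Mathlib

section
/- Let 0 → A → E →^p B → 0 be a short exact sequence of associative algebras and let s, s' be two linear sections of p. Then the non-abelian 2-cocycles (φ^s, ψ^s, χ^s) and (φ^{s'}, ψ^{s'}, χ^{s'}) induced by s and s' are equivalent via β := s − s' : B → A. -/
/- STATEMENT 2: the cocycles induced by two linear sections s, s' of a short
   exact sequence 0 → A → E → B → 0 are equivalent via β := s − s'. -/

variable {k : Type*} [Field k]
variable {A B E : Type*}
variable [NonUnitalRing A] [Module k A] [SMulCommClass k A A] [IsScalarTower k A A]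
variable [NonUnitalRing B] [Module k B] [SMulCommClass k B B] [IsScalarTower k B B]
variable [NonUnitalRing E] [Module k E] [SMulCommClass k E E] [IsScalarTower k E E]

/-- Equivalence of non-abelian 2-cocycles `(φ,ψ,χ)` and `(φ',ψ',χ')` via
`β : B → A`:  `φ' = φ − β(·)·a`, `ψ' = ψ − a·β(·)` and
`χ' = χ − φ(β) − ψ(β) + β∘m_B + β·β`. -/
def CocycleEquivVia (β : B →ₗ[k] A)
    (φ ψ : B →ₗ[k] A →ₗ[k] A) (χ : B →ₗ[k] B →ₗ[k] A)
    (φ' ψ' : B →ₗ[k] A →ₗ[k] A) (χ' : B →ₗ[k] B →ₗ[k] A) : Prop :=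
  (∀ b a, φ' b a = φ b a - β b * a) ∧
  (∀ b a, ψ' b a = ψ b a - a * β b) ∧
  (∀ b₁ b₂, χ' b₁ b₂ =
    χ b₁ b₂ - φ b₁ (β b₂) - ψ b₂ (β b₁) + β (b₁ * b₂) + β b₁ * β b₂)

theorem cocycles_of_two_sections_equivalent
    (i : A →ₙₐ[k] E) (p : E →ₙₐ[k] B)
    (hinj : Function.Injective i) (hsurj : Function.Surjective p)
    (hexact : ∀ e, p e = 0 ↔ e ∈ Set.range i)
    (s s' : B →ₗ[k] E) (hs : ∀ b, p (s b) = b) (hs' : ∀ b, p (s' b) = b)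
    (φs ψs : B →ₗ[k] A →ₗ[k] A) (χs : B →ₗ[k] B →ₗ[k] A)
    (hφs : ∀ b a, i (φs b a) = s b * i a)
    (hψs : ∀ b a, i (ψs b a) = i a * s b)
    (hχs : ∀ b₁ b₂, i (χs b₁ b₂) = s b₁ * s b₂ - s (b₁ * b₂))
    (φs' ψs' : B →ₗ[k] A →ₗ[k] A) (χs' : B →ₗ[k] B →ₗ[k] A)
    (hφs' : ∀ b a, i (φs' b a) = s' b * i a)
    (hψs' : ∀ b a, i (ψs' b a) = i a * s' b)
    (hχs' : ∀ b₁ b₂, i (χs' b₁ b₂) = s' b₁ * s' b₂ - s' (b₁ * b₂))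
    (β : B →ₗ[k] A) (hβ : ∀ b, i (β b) = s b - s' b) :
    CocycleEquivVia β φs ψs χs φs' ψs' χs' := by
  refine ⟨fun b a => hinj ?_, fun b a => hinj ?_, fun b₁ b₂ => hinj ?_⟩
  · simp only [map_sub, map_mul, hφs, hφs', hβ]
    noncomm_ring
  · simp only [map_sub, map_mul, hψs, hψs', hβ]
    noncomm_ring
  · simp only [map_sub, map_add, map_mul, hχs, hχs', hφs, hψs, hβ]
    noncomm_ring
end

section
/- If two non-abelian extensions E and E' of B by A are equivalent via an algebra isomorphism θ : E → E' (commuting with the inclusions of A and projections to B), and s : B → E, s' : B → E' are linear sections, then the induced cocycles (φ^s, ψ^s, χ^s) and (φ^{s'}, ψ^{s'}, χ^{s'}) are equivalent via β := θ⁻¹ ∘ s' − s. -/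
/- STATEMENT 4: if two extensions E, E' of B by A are equivalent via an
   algebra isomorphism θ, and s, s' are linear sections, then the induced
   cocycles are equivalent via β := θ⁻¹ ∘ s' − s. -/

variable {k : Type*} [Field k]
variable {A B E E' : Type*}
variable [NonUnitalRing A] [Module k A] [SMulCommClass k A A] [IsScalarTower k A A]
variable [NonUnitalRing B] [Module k B] [SMulCommClass k B B] [IsScalarTower k B B]
variable [NonUnitalRing E] [Module k E] [SMulCommClass k E E] [IsScalarTower k E E]
variable [NonUnitalRing E'] [Module k E'] [SMulCommClass k E' E'] [IsScalarTower k E' E']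

theorem equivalent_extensions_give_equivalent_cocycles
    -- the two short exact sequences
    (i : A →ₙₐ[k] E) (p : E →ₙₐ[k] B)
    (hinj : Function.Injective i) (hsurj : Function.Surjective p)
    (hexact : ∀ e, p e = 0 ↔ e ∈ Set.range i)
    (i' : A →ₙₐ[k] E') (p' : E' →ₙₐ[k] B)
    (hinj' : Function.Injective i') (hsurj' : Function.Surjective p')
    (hexact' : ∀ e, p' e = 0 ↔ e ∈ Set.range i')
    -- the equivalence of extensions: an algebra isomorphism θ commuting
    -- with the inclusions and the projections
    (θ : E →ₙₐ[k] E') (θinv : E' →ₙₐ[k] E)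
    (hθ₁ : ∀ e, θinv (θ e) = e) (hθ₂ : ∀ e', θ (θinv e') = e')
    (hθi : ∀ a, θ (i a) = i' a) (hθp : ∀ e, p' (θ e) = p e)
    -- sections
    (s : B →ₗ[k] E) (hs : ∀ b, p (s b) = b)
    (s' : B →ₗ[k] E') (hs' : ∀ b, p' (s' b) = b)
    -- the induced cocycles
    (φs ψs : B →ₗ[k] A →ₗ[k] A) (χs : B →ₗ[k] B →ₗ[k] A)
    (hφs : ∀ b a, i (φs b a) = s b * i a)
    (hψs : ∀ b a, i (ψs b a) = i a * s b)
    (hχs : ∀ b₁ b₂, i (χs b₁ b₂) = s b₁ * s b₂ - s (b₁ * b₂))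
    (φs' ψs' : B →ₗ[k] A →ₗ[k] A) (χs' : B →ₗ[k] B →ₗ[k] A)
    (hφs' : ∀ b a, i' (φs' b a) = s' b * i' a)
    (hψs' : ∀ b a, i' (ψs' b a) = i' a * s' b)
    (hχs' : ∀ b₁ b₂, i' (χs' b₁ b₂) = s' b₁ * s' b₂ - s' (b₁ * b₂))
    -- β := θ⁻¹ ∘ s' − s
    (β : B →ₗ[k] A) (hβ : ∀ b, i (β b) = θinv (s' b) - s b) :
    CocycleEquivVia β φs' ψs' χs' φs ψs χs := by
  have hti : ∀ a, θinv (i' a) = i a := fun a => by rw [← hθi, hθ₁]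
  have hts : ∀ b, θinv (s' b) = i (β b) + s b := fun b => by rw [hβ]; abel
  refine ⟨fun b a => hinj ?_, fun b a => hinj ?_, fun b₁ b₂ => hinj ?_⟩
  · have h1 : i (φs' b a) = θinv (i' (φs' b a)) := (hti _).symm
    rw [hφs', map_mul, hti, hts] at h1
    rw [map_sub, hφs, h1, map_mul]
    noncomm_ring
  · have h1 : i (ψs' b a) = θinv (i' (ψs' b a)) := (hti _).symm
    rw [hψs', map_mul, hti, hts] at h1
    rw [map_sub, hψs, h1, map_mul]
    noncomm_ring
  · have h1 : i (χs' b₁ b₂) = θinv (i' (χs' b₁ b₂)) := (hti _).symm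
    rw [hχs', map_sub, map_mul, hts, hts, hts] at h1
    have h2 : i (φs' b₁ (β b₂)) = θinv (i' (φs' b₁ (β b₂))) := (hti _).symm
    rw [hφs', map_mul, hti, hts] at h2
    have h3 : i (ψs' b₂ (β b₁)) = θinv (i' (ψs' b₂ (β b₁))) := (hti _).symm
    rw [hψs', map_mul, hti, hts] at h3
    rw [hχs, map_add, map_add, map_sub, map_sub, h1, h2, h3, map_mul i]
    noncomm_ring
end

section
/- Let V = A ⊕ B be a direct sum of vector spaces. The graded subspace L ⊆ C^{•+1}(A⊕B, A⊕B) consisting of multilinear maps (A⊕B)^{⊗n} → A⊕B that take values in A and vanish whenever all arguments lie in A, is closed under the Gerstenhaber bracket, i.e. f, g ∈ L implies [f,g] ∈ L. -/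
/- STATEMENT 10: for V = A ⊕ B, the graded subspace L of C^{•+1}(A⊕B, A⊕B)
   of multilinear maps valued in A which vanish when all arguments lie in A
   is closed under the Gerstenhaber bracket. -/

abbrev Cochain (V : Type*) := (ℕ → V) → V

def HasArity {V : Type*} (n : ℕ) (f : Cochain V) : Prop :=
  ∀ a b : ℕ → V, (∀ i < n, a i = b i) → f a = f b

section Gerstenhaber

variable {V : Type*} [AddCommGroup V]

def insertArg (n i : ℕ) (g : Cochain V) (a : ℕ → V) : ℕ → V := fun j =>
  if j < i then a j else if j = i then g (fun t => a (t + i)) else a (j + n)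

def gcomp (m n : ℕ) (f g : Cochain V) : Cochain V := fun a =>
  ∑ i ∈ Finset.range (m + 1), ((-1 : ℤ) ^ (n * i)) • f (insertArg n i g a)

def gbracket (m n : ℕ) (f g : Cochain V) : Cochain V :=
  gcomp m n f g - ((-1 : ℤ) ^ (m * n)) • gcomp n m g f

end Gerstenhaber

/-- Membership in `L`: a cochain of arity `n` on `A ⊕ B` which takes its
values in `A` and vanishes whenever all its arguments lie in `A`. -/
def MemL {A B : Type*} [AddCommGroup A] [AddCommGroup B]
    (n : ℕ) (f : Cochain (A × B)) : Prop :=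
  HasArity n f ∧ (∀ a, (f a).2 = 0) ∧
    (∀ a : ℕ → A × B, (∀ i < n, (a i).2 = 0) → f a = 0)


lemma gcomp_memL {A B : Type*} [AddCommGroup A] [AddCommGroup B]
    (p q : ℕ) (F G : Cochain (A × B))
    (hF : MemL (p + 1) F) (hG : MemL (q + 1) G) :
    MemL (p + q + 1) (gcomp p q F G) := by
  obtain ⟨hFa, hFA, hF0⟩ := hF
  obtain ⟨hGa, hGA, hG0⟩ := hG
  refine ⟨?_, ?_, ?_⟩
  · intro a b hab
    unfold gcomp
    refine Finset.sum_congr rfl fun i hi => ?_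
    simp only [Finset.mem_range] at hi
    congr 1
    apply hFa
    intro j hj
    unfold insertArg
    by_cases h1 : j < i
    · simp only [h1, if_true]
      exact hab j (by omega)
    · by_cases h2 : j = i
      · simp only [if_neg h1, if_pos h2]
        apply hGa
        intro t ht
        exact hab (t + i) (by omega)
      · simp only [h1, if_false, h2]
        exact hab (j + q) (by omega)
  · intro a
    unfold gcomp
    rw [Prod.snd_sum]
    refine Finset.sum_eq_zero fun i _ => ?_
    rw [Prod.smul_snd, hFA, smul_zero]
  · intro a ha
    unfold gcomp
    refine Finset.sum_eq_zero fun i hi => ?_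
    simp only [Finset.mem_range] at hi
    rw [hF0, smul_zero]
    intro j hj
    unfold insertArg
    by_cases h1 : j < i
    · simp only [h1, if_true]
      exact ha j (by omega)
    · by_cases h2 : j = i
      · simp only [if_neg h1, if_pos h2]
        exact hGA _
      · simp only [h1, if_false, h2]
        exact ha (j + q) (by omega)

theorem memL_closed_under_gerstenhaber_bracket
    {A B : Type*} [AddCommGroup A] [AddCommGroup B]
    (m n : ℕ) (f g : Cochain (A × B))
    (hf : MemL (m + 1) f) (hg : MemL (n + 1) g) :
    MemL (m + n + 1) (gbracket m n f g) := by
  have h1 := gcomp_memL m n f g hf hg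
  have h2 := gcomp_memL n m g f hg hf
  rw [show n + m + 1 = m + n + 1 by omega] at h2
  obtain ⟨h1a, h1A, h10⟩ := h1
  obtain ⟨h2a, h2A, h20⟩ := h2
  refine ⟨?_, ?_, ?_⟩
  · intro a b hab
    unfold gbracket
    simp only [Pi.sub_apply, Pi.smul_apply]
    rw [h1a a b hab, h2a a b hab]
  · intro a
    unfold gbracket
    simp only [Pi.sub_apply, Pi.smul_apply, Prod.snd_sub, Prod.smul_snd,
      h1A, h2A, smul_zero, sub_zero]
  · intro a ha
    unfold gbracket
    simp only [Pi.sub_apply, Pi.smul_apply, h10 a ha, h20 a ha, smul_zero, sub_zero]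
end

section
/- For β : B → A (extended by zero on A, an element of L⁰), the gauge term g_β := −Σ_{n≥0} (1/(n+1)!)(ad_β)ⁿ δβ in the dgLa L equals, evaluated on e₁ = a₁+b₁ and e₂ = a₂+b₂: g_β(e₁,e₂) = −β(b₁)·a₂ − a₁·β(b₂) + β(b₁·b₂) + β(b₁)·β(b₂). In particular the series terminates: (ad_β)ⁿ δβ = 0 for n ≥ 2. -/
/-- Hochschild differential (for degree-0 elements both sign conventions for
δ agree: `δβ = [μ, β]`). -/
def hdel {R : Type*} [NonUnitalRing R] (n : ℕ) (f : Cochain R) : Cochain R := fun a =>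
  a 0 * f (fun j => a (j + 1))
    + ∑ i ∈ Finset.range n, ((-1 : ℤ) ^ (i + 1)) •
        f (fun j => if j < i then a j else if j = i then a i * a (i + 1) else a (j + 1))
    + ((-1 : ℤ) ^ (n + 1)) • (f a * a n)

variable {k : Type*} [Field k] [CharZero k]
variable {A B : Type*}
variable [NonUnitalRing A] [Module k A] [SMulCommClass k A A] [IsScalarTower k A A]
variable [NonUnitalRing B] [Module k B] [SMulCommClass k B B] [IsScalarTower k B B]

def betaCochain (β : B →ₗ[k] A) : Cochain (A × B) := fun a => (β (a 0).2, 0)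

def adBeta (β : B →ₗ[k] A) (c : Cochain (A × B)) : Cochain (A × B) :=
  gbracket 0 1 (betaCochain β) c

/-- The gauge term `g_β = −Σ_{n≥0} (ad_β)ⁿ (δβ) / (n+1)!`; since
`(ad_β)ⁿ δβ = 0` for `n ≥ 2`, the series is `−δβ − ½ [β, δβ]`. -/
noncomputable def gaugeTerm (β : B →ₗ[k] A) : Cochain (A × B) :=
  -(hdel 1 (betaCochain β)) - (2 : k)⁻¹ • adBeta β (hdel 1 (betaCochain β))

set_option linter.unusedSectionVars false
section Helpers
variable {k : Type*} [Field k] [CharZero k]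
variable {A B : Type*}
variable [NonUnitalRing A] [Module k A] [SMulCommClass k A A] [IsScalarTower k A A]
variable [NonUnitalRing B] [Module k B] [SMulCommClass k B B] [IsScalarTower k B B]

lemma hdel_beta (β : B →ₗ[k] A) (a : ℕ → A × B) :
    hdel 1 (betaCochain β) a =
      ((a 0).1 * β (a 1).2 - β ((a 0).2 * (a 1).2) + β (a 0).2 * (a 1).1, 0) := by
  simp [hdel, betaCochain, Finset.sum_range_succ, Prod.ext_iff, Prod.mul_def, sub_eq_add_neg]

lemma insertArg_zero_apply (g : Cochain (A × B)) (a : ℕ → A × B) (j : ℕ) :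
    insertArg 0 0 g a j = if j = 0 then g a else a j := by
  simp [insertArg]

lemma insertArg_one_apply (g : Cochain (A × B)) (a : ℕ → A × B) (j : ℕ) :
    insertArg 0 1 g a j = if j < 1 then a j else if j = 1 then g (fun t => a (t + 1)) else a j := by
  simp [insertArg]

lemma adBeta_hdel_beta (β : B →ₗ[k] A) (a : ℕ → A × B) :
    adBeta β (hdel 1 (betaCochain β)) a =
      (-(β (a 0).2 * β (a 1).2) - β (a 0).2 * β (a 1).2, 0) := by
  simp [adBeta, gbracket, gcomp, insertArg, betaCochain, hdel_beta,
    Finset.sum_range_succ, Prod.ext_iff, sub_eq_add_neg]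

lemma adBeta_sq (β : B →ₗ[k] A) :
    adBeta β (adBeta β (hdel 1 (betaCochain β))) = 0 := by
  funext a
  simp only [adBeta, gbracket, gcomp, Pi.sub_apply, Pi.smul_apply, Finset.sum_range_succ,
    Finset.sum_range_zero, adBeta_hdel_beta, insertArg_zero_apply, insertArg_one_apply]
  simp [betaCochain, insertArg, hdel_beta, adBeta_hdel_beta, Prod.ext_iff, sub_eq_add_neg, gcomp, Finset.sum_range_succ]

lemma adBeta_zero (β : B →ₗ[k] A) : adBeta β 0 = 0 := by
  funext a
  simp [adBeta, gbracket, gcomp, insertArg, betaCochain,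
    Finset.sum_range_succ, Prod.ext_iff]

end Helpers

theorem gaugeTerm_formula (β : B →ₗ[k] A) :
    -- the series terminates: (ad_β)ⁿ δβ = 0 for n ≥ 2
    (∀ n, 2 ≤ n → (adBeta β)^[n] (hdel 1 (betaCochain β)) = 0) ∧
    -- the explicit formula for g_β on (e₁, e₂) = (a₁ + b₁, a₂ + b₂)
    (∀ a : ℕ → A × B,
      gaugeTerm β a =
        (-(β (a 0).2 * (a 1).1) - (a 0).1 * β (a 1).2
            + β ((a 0).2 * (a 1).2) + β (a 0).2 * β (a 1).2, 0)) := by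
  constructor
  · intro n hn
    obtain ⟨m, rfl⟩ := Nat.exists_eq_add_of_le hn
    rw [Nat.add_comm, Function.iterate_add_apply]
    have h2 : (adBeta β)^[2] (hdel 1 (betaCochain β)) = 0 := by
      simpa [Function.iterate_succ_apply'] using adBeta_sq β
    rw [h2, Function.iterate_fixed (adBeta_zero β)]
  · intro a
    show -(hdel 1 (betaCochain β) a) - (2 : k)⁻¹ • (adBeta β (hdel 1 (betaCochain β)) a) = _
    rw [hdel_beta, adBeta_hdel_beta]
    have : ((2 : k)⁻¹ • ((-(β (a 0).2 * β (a 1).2) - β (a 0).2 * β (a 1).2, 0) : A × B))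
        = (-(β (a 0).2 * β (a 1).2), 0) := by
      rw [Prod.smul_def, Prod.mk.injEq]
      refine ⟨?_, by simp⟩
      simp only [sub_eq_add_neg, ← neg_add, smul_neg]
      rw [← two_smul k (β (a 0).2 * β (a 1).2), inv_smul_smul₀ two_ne_zero]
    rw [this, Prod.ext_iff]
    refine ⟨?_, by simp⟩
    simp only [Prod.fst_sub, Prod.fst_neg, Prod.fst_add, Prod.snd_sub]
    abel
end
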